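/- Let T > 0, ε > 0, R ≥ 1, let λ : [0,T) → (0,1] and Q : [0,T) → [0,∞) be continuous, and let g : ℝ² → [0,∞) be continuous, not identically zero, with support contained in {y ∈ ℝ² : |y| ≤ R}. Suppose w : ℝ² × [0,T) → [0,∞) is continuous, nonnegative, and satisfies for all (x,t) the integral equation w(x,t) = (λ(0)ε/(2π)) ∫_{|x−y|≤t} g(y)/√(t² − |x−y|²) dy + (1/(2π)) ∫₀ᵗ ∫_{|x−y|≤t−τ} (Q(τ)w(y,τ) + λ(τ)^{−1}|w(y,τ)|²)/√((t−τ)² − |x−y|²) dy dτ. Then for all (x,t) with t < T and R ≤ |x| ≤ t − R, one has w(x,t) ≥ λ(0) ε ‖g‖_{L¹(ℝ²)} / (2√2 π √(t+R) √(t−|x|+R)). -/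

import Mathlib

open MeasureTheory Set Real

lemma key_16 (T ε R : ℝ) (hε : 0 < ε) (hR : 1 ≤ R)
    (lam Q : ℝ → ℝ)
    (hlam : ∀ t ∈ Ico (0 : ℝ) T, 0 < lam t ∧ lam t ≤ 1)
    (hQ : ∀ t ∈ Ico (0 : ℝ) T, 0 ≤ Q t)
    (g : EuclideanSpace ℝ (Fin 2) → ℝ)
    (hgc : Continuous g) (hgpos : ∀ y, 0 ≤ g y)
    (hgsupp : ∀ y : EuclideanSpace ℝ (Fin 2), R < ‖y‖ → g y = 0)
    (w : EuclideanSpace ℝ (Fin 2) → ℝ → ℝ)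
    (hwpos : ∀ x : EuclideanSpace ℝ (Fin 2), ∀ t ∈ Ico (0 : ℝ) T, 0 ≤ w x t)
    (heq : ∀ x : EuclideanSpace ℝ (Fin 2), ∀ t ∈ Ico (0 : ℝ) T,
      w x t =
        (lam 0 * ε / (2 * π)) *
          (∫ y in {y : EuclideanSpace ℝ (Fin 2) | ‖x - y‖ ≤ t},
            g y / Real.sqrt (t ^ 2 - ‖x - y‖ ^ 2))
        + (1 / (2 * π)) *
          ∫ τ in (0 : ℝ)..t,
            ∫ y in {y : EuclideanSpace ℝ (Fin 2) | ‖x - y‖ ≤ t - τ},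
              (Q τ * w y τ + (lam τ)⁻¹ * |w y τ| ^ 2) /
                Real.sqrt ((t - τ) ^ 2 - ‖x - y‖ ^ 2))
    (x : EuclideanSpace ℝ (Fin 2)) (t : ℝ) (htT : t < T) (hx1 : R ≤ ‖x‖)
    (hx2 : ‖x‖ + R < t) :
    lam 0 * ε * (∫ y, g y) /
        (2 * Real.sqrt 2 * π * Real.sqrt (t + R) * Real.sqrt (t - ‖x‖ + R))
      ≤ w x t := by
  have hxnn : (0:ℝ) ≤ ‖x‖ := norm_nonneg x
  have ht0 : 0 < t := by linarith
  have htmem : t ∈ Ico (0:ℝ) T := ⟨ht0.le, htT⟩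
  have hT0 : (0:ℝ) < T := lt_of_le_of_lt ht0.le htT
  have hlam0 : 0 < lam 0 := (hlam 0 ⟨le_refl 0, hT0⟩).1
  have hpi : (0:ℝ) < π := Real.pi_pos
  -- notation
  set S : Set (EuclideanSpace ℝ (Fin 2)) := {y | ‖x - y‖ ≤ t} with hS
  set c : ℝ := Real.sqrt 2 * Real.sqrt (t + R) * Real.sqrt (t - ‖x‖ + R) with hc
  have hc_pos : 0 < c := by
    apply mul_pos (mul_pos _ _)
    · exact Real.sqrt_pos.2 (by linarith)
    · exact Real.sqrt_pos.2 (by norm_num)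
    · exact Real.sqrt_pos.2 (by linarith)
  set f : EuclideanSpace ℝ (Fin 2) → ℝ :=
    fun y => g y / Real.sqrt (t ^ 2 - ‖x - y‖ ^ 2) with hf
  set h : EuclideanSpace ℝ (Fin 2) → ℝ := fun y => g y / c with hh
  -- pointwise bound
  have hpt : ∀ y, h y ≤ f y := by
    intro y
    rcases eq_or_lt_of_le (hgpos y) with hg0 | hg0
    · simp [hf, hh, ← hg0]
    · have hyR : ‖y‖ ≤ R := by
        by_contra hcon
        exact absurd (hgsupp y (lt_of_not_ge hcon)) (ne_of_gt hg0)
      have hr1 : ‖x - y‖ ≤ ‖x‖ + R := le_trans (norm_sub_le x y) (by linarith)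
      have hr2 : ‖x‖ - R ≤ ‖x - y‖ := by
        have := norm_sub_norm_le x y
        linarith
      have hrpos : (0:ℝ) ≤ ‖x - y‖ := norm_nonneg _
      have hlt : ‖x - y‖ < t := lt_of_le_of_lt hr1 hx2
      have hspos : 0 < Real.sqrt (t ^ 2 - ‖x - y‖ ^ 2) := by
        apply Real.sqrt_pos.2
        nlinarith
      have hb : t ^ 2 - ‖x - y‖ ^ 2 ≤ 2 * (t + R) * (t - ‖x‖ + R) := by
        nlinarith
      have hsle : Real.sqrt (t ^ 2 - ‖x - y‖ ^ 2) ≤ c := by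
        have h1 : Real.sqrt (t ^ 2 - ‖x - y‖ ^ 2) ≤
            Real.sqrt (2 * (t + R) * (t - ‖x‖ + R)) := Real.sqrt_le_sqrt hb
        have h2 : Real.sqrt (2 * (t + R) * (t - ‖x‖ + R)) = c := by
          rw [hc, Real.sqrt_mul (by positivity), Real.sqrt_mul (by norm_num)]
        rw [h2] at h1; exact h1
      exact div_le_div_of_nonneg_left (hgpos y) hspos hsle
  -- g integrable
  have hgcs : HasCompactSupport g := by
    apply HasCompactSupport.intro (isCompact_closedBall (0:EuclideanSpace ℝ (Fin 2)) R)
    intro y hy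
    apply hgsupp
    simpa [Metric.mem_closedBall, dist_eq_norm] using hy
  have hgint : Integrable g := hgc.integrable_of_hasCompactSupport hgcs
  -- f measurable
  have hfmeas : AEStronglyMeasurable f volume := by
    apply (hgc.measurable.div _).aestronglyMeasurable
    exact (Real.continuous_sqrt.comp
      ((continuous_const.sub ((continuous_const.sub continuous_id).norm.pow 2)))).measurable
  -- f integrable
  have hfint : Integrable f := by
    obtain ⟨y₀, _, hy₀'⟩ := (isCompact_closedBall (0:EuclideanSpace ℝ (Fin 2)) R).exists_isMaxOn
      ⟨0, by simp; linarith⟩ hgc.continuousOn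
    have hy₀ : ∀ y ∈ Metric.closedBall (0:EuclideanSpace ℝ (Fin 2)) R, g y ≤ g y₀ :=
      fun y hy => hy₀' hy
    set M : ℝ := g y₀ with hM
    have hM0 : 0 ≤ M := hgpos y₀
    set δ : ℝ := t ^ 2 - (‖x‖ + R) ^ 2 with hδ
    have hδ0 : 0 < δ := by nlinarith
    set C : ℝ := M / Real.sqrt δ with hC
    have hC0 : 0 ≤ C := div_nonneg hM0 (Real.sqrt_nonneg _)
    apply Integrable.mono' (g := (Metric.closedBall (0:EuclideanSpace ℝ (Fin 2)) R).indicator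
      (fun _ => C)) _ hfmeas
    · filter_upwards with y
      by_cases hy : y ∈ Metric.closedBall (0:EuclideanSpace ℝ (Fin 2)) R
      · rw [Set.indicator_of_mem hy]
        have hyR : ‖y‖ ≤ R := by simpa [Metric.mem_closedBall, dist_eq_norm] using hy
        have hr1 : ‖x - y‖ ≤ ‖x‖ + R := le_trans (norm_sub_le x y) (by linarith)
        have hsle : Real.sqrt δ ≤ Real.sqrt (t ^ 2 - ‖x - y‖ ^ 2) := by
          apply Real.sqrt_le_sqrt
          have : (0:ℝ) ≤ ‖x - y‖ := norm_nonneg _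
          nlinarith
        have hspos : 0 < Real.sqrt δ := Real.sqrt_pos.2 hδ0
        have hfnn : 0 ≤ f y := div_nonneg (hgpos y) (Real.sqrt_nonneg _)
        rw [Real.norm_eq_abs, abs_of_nonneg hfnn]
        exact div_le_div₀ hM0 (hy₀ y hy) hspos hsle
      · rw [Set.indicator_of_notMem hy]
        have : g y = 0 := hgsupp y (by
          simpa [Metric.mem_closedBall, dist_eq_norm] using hy)
        simp [hf, this]
    · exact (integrableOn_const measure_closedBall_lt_top.ne).integrable_indicator
        measurableSet_closedBall
  -- h integrable
  have hhint : Integrable h := hgint.div_const c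
  -- set measurability
  have hSmeas : MeasurableSet S := by
    apply IsClosed.measurableSet
    exact isClosed_le (continuous_const.sub continuous_id).norm continuous_const
  -- h vanishes outside S
  have hhS : ∀ y, y ∉ S → h y = 0 := by
    intro y hy
    have : t < ‖x - y‖ := lt_of_not_ge hy
    have hgy : g y = 0 := by
      apply hgsupp
      have := norm_sub_norm_le (x - y) x
      have hxy : ‖(x - y) - x‖ = ‖y‖ := by
        rw [sub_sub_cancel_left, norm_neg]
      rw [hxy] at this
      linarith
    simp [hh, hgy]
  -- main integral comparison
  have hcomp : (∫ y, g y) / c ≤ ∫ y in S, f y := by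
    have h1 : ∫ y in S, h y = ∫ y, h y :=
      setIntegral_eq_integral_of_forall_compl_eq_zero hhS
    have h2 : ∫ y, h y = (∫ y, g y) / c := integral_div c g
    have h3 : ∫ y in S, h y ≤ ∫ y in S, f y := by
      apply setIntegral_mono_on hhint.integrableOn hfint.integrableOn hSmeas
      intro y _; exact hpt y
    rw [h1, h2] at h3; exact h3
  -- Duhamel term nonneg
  have hB : 0 ≤ ∫ τ in (0:ℝ)..t,
      ∫ y in {y : EuclideanSpace ℝ (Fin 2) | ‖x - y‖ ≤ t - τ},
        (Q τ * w y τ + (lam τ)⁻¹ * |w y τ| ^ 2) /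
          Real.sqrt ((t - τ) ^ 2 - ‖x - y‖ ^ 2) := by
    apply intervalIntegral.integral_nonneg ht0.le
    intro τ hτ
    have hτT : τ ∈ Ico (0:ℝ) T := ⟨hτ.1, lt_of_le_of_lt hτ.2 htT⟩
    apply setIntegral_nonneg
    · exact IsClosed.measurableSet
        (isClosed_le (continuous_const.sub continuous_id).norm continuous_const)
    · intro y _
      apply div_nonneg _ (Real.sqrt_nonneg _)
      have h1 := hwpos y τ hτT
      have h2 := hQ τ hτT
      have h3 := (hlam τ hτT).1
      positivity
  -- conclude
  have hw := heq x t htmem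
  have hcoef : 0 < lam 0 * ε / (2 * π) := by positivity
  have hA : lam 0 * ε / (2 * π) * ((∫ y, g y) / c) ≤
      lam 0 * ε / (2 * π) * (∫ y in S, f y) :=
    mul_le_mul_of_nonneg_left hcomp hcoef.le
  have hfinal : lam 0 * ε * (∫ y, g y) /
      (2 * Real.sqrt 2 * π * Real.sqrt (t + R) * Real.sqrt (t - ‖x‖ + R)) =
      lam 0 * ε / (2 * π) * ((∫ y, g y) / c) := by
    have h2 : Real.sqrt 2 ≠ 0 := by positivity
    have ha : Real.sqrt (t + R) ≠ 0 := by
      have : (0:ℝ) < t + R := by linarith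
      positivity
    have hb : Real.sqrt (t - ‖x‖ + R) ≠ 0 := by
      have : (0:ℝ) < t - ‖x‖ + R := by linarith
      positivity
    rw [hc]
    field_simp
  rw [hw, hfinal]
  calc lam 0 * ε / (2 * π) * ((∫ y, g y) / c)
      ≤ lam 0 * ε / (2 * π) * (∫ y in S, f y) := hA
    _ ≤ _ := le_add_of_nonneg_right (by positivity)

/-- Pointwise lower bound from the 2D Duhamel integral equation: if
`λ : [0,T) → (0,1]` and `Q : [0,T) → [0,∞)` are continuous, `g ≥ 0` is continuous,
not identically zero, supported in `{|y| ≤ R}`, and `w ≥ 0` is continuous and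
satisfies the integral equation, then for `R ≤ |x| ≤ t - R`, `t < T`,
`w(x,t) ≥ λ(0) ε ‖g‖_{L¹} / (2√2 π √(t+R) √(t-|x|+R))`. -/
theorem stmt_16 (T ε R : ℝ) (hT : 0 < T) (hε : 0 < ε) (hR : 1 ≤ R)
    (lam Q : ℝ → ℝ)
    (hlamc : ContinuousOn lam (Ico 0 T))
    (hlam : ∀ t ∈ Ico (0 : ℝ) T, 0 < lam t ∧ lam t ≤ 1)
    (hQc : ContinuousOn Q (Ico 0 T))
    (hQ : ∀ t ∈ Ico (0 : ℝ) T, 0 ≤ Q t)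
    (g : EuclideanSpace ℝ (Fin 2) → ℝ)
    (hgc : Continuous g) (hgpos : ∀ y, 0 ≤ g y) (hgne : ∃ y, g y ≠ 0)
    (hgsupp : ∀ y : EuclideanSpace ℝ (Fin 2), R < ‖y‖ → g y = 0)
    (w : EuclideanSpace ℝ (Fin 2) → ℝ → ℝ)
    (hwc : ContinuousOn (fun q : EuclideanSpace ℝ (Fin 2) × ℝ => w q.1 q.2)
      (univ ×ˢ Ico 0 T))
    (hwpos : ∀ x : EuclideanSpace ℝ (Fin 2), ∀ t ∈ Ico (0 : ℝ) T, 0 ≤ w x t)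
    (heq : ∀ x : EuclideanSpace ℝ (Fin 2), ∀ t ∈ Ico (0 : ℝ) T,
      w x t =
        (lam 0 * ε / (2 * π)) *
          (∫ y in {y : EuclideanSpace ℝ (Fin 2) | ‖x - y‖ ≤ t},
            g y / Real.sqrt (t ^ 2 - ‖x - y‖ ^ 2))
        + (1 / (2 * π)) *
          ∫ τ in (0 : ℝ)..t,
            ∫ y in {y : EuclideanSpace ℝ (Fin 2) | ‖x - y‖ ≤ t - τ},
              (Q τ * w y τ + (lam τ)⁻¹ * |w y τ| ^ 2) /
                Real.sqrt ((t - τ) ^ 2 - ‖x - y‖ ^ 2)) :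
    ∀ x : EuclideanSpace ℝ (Fin 2), ∀ t : ℝ, t < T → R ≤ ‖x‖ → ‖x‖ ≤ t - R →
      lam 0 * ε * (∫ y, g y) /
          (2 * Real.sqrt 2 * π * Real.sqrt (t + R) * Real.sqrt (t - ‖x‖ + R))
        ≤ w x t := by
  intro x t htT hx1 hx2
  have hxnn : (0:ℝ) ≤ ‖x‖ := norm_nonneg x
  have ht0 : 0 < t := by linarith
  have htmem : t ∈ Ico (0:ℝ) T := ⟨ht0.le, htT⟩
  set Φ : ℝ → ℝ := fun s => lam 0 * ε * (∫ y, g y) /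
      (2 * Real.sqrt 2 * π * Real.sqrt (s + R) * Real.sqrt (s - ‖x‖ + R)) with hΦ
  have hne : (nhdsWithin t (Ioo t T)).NeBot := left_nhdsWithin_Ioo_neBot htT
  -- tendsto of w x ·
  have hcw : ContinuousWithinAt (fun q : EuclideanSpace ℝ (Fin 2) × ℝ => w q.1 q.2)
      (univ ×ˢ Ico 0 T) (x, t) := hwc (x, t) ⟨mem_univ x, htmem⟩
  have hmap : Filter.Tendsto (fun s : ℝ => ((x : EuclideanSpace ℝ (Fin 2)), s))
      (nhdsWithin t (Ioo t T)) (nhdsWithin (x, t) (univ ×ˢ Ico 0 T)) := by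
    apply tendsto_nhdsWithin_of_tendsto_nhds_of_eventually_within
    · exact ((continuous_const.prodMk continuous_id).tendsto t).mono_left nhdsWithin_le_nhds
    · filter_upwards [self_mem_nhdsWithin] with s hs
      exact ⟨mem_univ x, ⟨by linarith [hs.1], hs.2⟩⟩
  have hwt : Filter.Tendsto (fun s => w x s) (nhdsWithin t (Ioo t T)) (nhds (w x t)) :=
    hcw.tendsto.comp hmap
  have hden : Continuous fun s : ℝ =>
      2 * Real.sqrt 2 * π * Real.sqrt (s + R) * Real.sqrt (s - ‖x‖ + R) := by
    apply Continuous.mul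
    · exact continuous_const.mul (Real.continuous_sqrt.comp (continuous_id.add continuous_const))
    · exact Real.continuous_sqrt.comp ((continuous_id.sub continuous_const).add continuous_const)
  have hdenne : 2 * Real.sqrt 2 * π * Real.sqrt (t + R) * Real.sqrt (t - ‖x‖ + R) ≠ 0 := by
    have h1 : (0:ℝ) < t + R := by linarith
    have h2 : (0:ℝ) < t - ‖x‖ + R := by linarith
    have := Real.pi_pos
    positivity
  have hΦt : Filter.Tendsto Φ (nhdsWithin t (Ioo t T)) (nhds (Φ t)) := by
    have hca : ContinuousAt Φ t :=
      ContinuousAt.div continuousAt_const hden.continuousAt hdenne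
    exact hca.continuousWithinAt.tendsto.comp
      (tendsto_nhdsWithin_of_tendsto_nhds_of_eventually_within _
        (Filter.tendsto_id.mono_left nhdsWithin_le_nhds)
        (by filter_upwards [self_mem_nhdsWithin] with s hs; exact mem_univ s)) |>.mono_left
        (le_refl _) |>.congr (fun s => rfl) |>.mono_right (by
          simp [nhdsWithin_univ])
  exact le_of_tendsto_of_tendsto hΦt hwt (by
    filter_upwards [self_mem_nhdsWithin] with s hs
    exact key_16 T ε R hε hR lam Q hlam hQ g hgc hgpos hgsupp w hwpos heq x s hs.2 hx1
      (by linarith [hs.1]))
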